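/- Let d ≥ 2. For every W^{1,1}(𝒢_1^d)-function u with edge derivative g, one has ∫_{𝒢_1^d} u² ≤ ((d−1)/4) ( ∫_{𝒢_1^d} |g| )²; that is, ‖u‖²_{L²(𝒢_1^d)} ≤ ((d−1)/4) ‖u'‖²_{L¹(𝒢_1^d)}. (This is the two-dimensional Sobolev inequality (19) on the d-dimensional grid, proved in Case 1 of the proof of Proposition 3.2.) -/

import Mathlib

open MeasureTheory ENNReal

noncomputable section

/-- Points of `ℝ^d` (with the Euclidean metric). -/
abbrev Pt (d : ℕ) := EuclideanSpace ℝ (Fin d)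

/-- `X_ε^j`: the union of all lines parallel to the `j`-th coordinate axis through points
of `ε ℤ^d`. -/
def lineSet (d : ℕ) (ε : ℝ) (j : Fin d) : Set (Pt d) :=
  {x | ∀ i, i ≠ j → ∃ n : ℤ, x i = ε * n}

/-- The `d`-dimensional cubic grid `𝒢_ε^d` of edgelength `ε`. -/
def grid (d : ℕ) (ε : ℝ) : Set (Pt d) := ⋃ j : Fin d, lineSet d ε j

/-- Integral over the grid with respect to the 1-dimensional Hausdorff measure of `ℝ^d`,
as a value in `[0,∞]`. -/
def gridInt (d : ℕ) (ε : ℝ) (f : Pt d → ℝ) : ℝ≥0∞ :=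
  ∫⁻ x in grid d ε, ENNReal.ofReal (f x) ∂μH[1]

/-- `‖u‖²_{L²(𝒢_ε^d)}`, as a value in `[0,∞]`. -/
def gridL2sq (d : ℕ) (ε : ℝ) (u : Pt d → ℝ) : ℝ≥0∞ := gridInt d ε (fun x => (u x) ^ 2)

/-- `‖u‖_{L^q(𝒢_ε^d)}^q`, as a value in `[0,∞]`. -/
def gridLq (d : ℕ) (ε q : ℝ) (u : Pt d → ℝ) : ℝ≥0∞ := gridInt d ε (fun x => |u x| ^ q)

/-- Update the `j`-th coordinate of a point of `ℝ^d`. -/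
def upd {d : ℕ} (y : Pt d) (j : Fin d) (t : ℝ) : Pt d := WithLp.toLp 2 (Function.update y j t)

/-- `u` is an `H¹(𝒢_ε^d)`-function with edge derivative `g`: both are Borel, on every edge
of the grid `u` is absolutely continuous with derivative `g` (expressed via the fundamental
theorem of calculus with `g` locally integrable on edges), and `u, g ∈ L²(𝒢_ε^d)`. -/
structure IsGridH1 (d : ℕ) (ε : ℝ) (u g : Pt d → ℝ) : Prop where
  meas_u : Measurable u
  meas_g : Measurable g
  intInt : ∀ (j : Fin d) (y : Pt d), (∀ i, i ≠ j → ∃ m : ℤ, y i = ε * m) →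
    ∀ n : ℤ, IntervalIntegrable (fun t => g (upd y j t)) volume (ε * n) (ε * (n + 1))
  ftc : ∀ (j : Fin d) (y : Pt d), (∀ i, i ≠ j → ∃ m : ℤ, y i = ε * m) →
    ∀ n : ℤ, ∀ s ∈ Set.Icc (ε * n) (ε * (n + 1)), ∀ t ∈ Set.Icc (ε * n) (ε * (n + 1)),
      u (upd y j t) - u (upd y j s) = ∫ r in s..t, g (upd y j r)
  finL2u : gridL2sq d ε u ≠ ∞
  finL2g : gridL2sq d ε g ≠ ∞

/-- `u` is a `W^{1,1}(𝒢_1^d)`-function with edge derivative `g`. -/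
structure IsGridW11 (d : ℕ) (u g : Pt d → ℝ) : Prop where
  meas_u : Measurable u
  meas_g : Measurable g
  intInt : ∀ (j : Fin d) (y : Pt d), (∀ i, i ≠ j → ∃ m : ℤ, y i = (m : ℝ)) →
    ∀ n : ℤ, IntervalIntegrable (fun t => g (upd y j t)) volume (n : ℝ) ((n : ℝ) + 1)
  ftc : ∀ (j : Fin d) (y : Pt d), (∀ i, i ≠ j → ∃ m : ℤ, y i = (m : ℝ)) →
    ∀ n : ℤ, ∀ s ∈ Set.Icc (n : ℝ) ((n : ℝ) + 1), ∀ t ∈ Set.Icc (n : ℝ) ((n : ℝ) + 1),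
      u (upd y j t) - u (upd y j s) = ∫ r in s..t, g (upd y j r)
  finL1u : gridInt d 1 (fun x => |u x|) ≠ ∞
  finL1g : gridInt d 1 (fun x => |g x|) ≠ ∞

/-- The vertex `ε k ∈ ε ℤ^d` of the grid. -/
def vert (d : ℕ) (ε : ℝ) (k : Fin d → ℤ) : Pt d := WithLp.toLp 2 (fun i => ε * k i)

/-- `v` is the piecewise-linear interpolation `ũ` of `u`: on each edge of the grid it is the
linear interpolation of the values of `u` at the two endpoints. -/
def IsInterp (d : ℕ) (ε : ℝ) (u v : Pt d → ℝ) : Prop :=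
  ∀ (k : Fin d → ℤ) (j : Fin d) (t : ℝ), t ∈ Set.Icc (0:ℝ) 1 →
    v ((1 - t) • vert d ε k + t • vert d ε (fun i => if i = j then k i + 1 else k i)) =
      (1 - t) * u (vert d ε k) + t * u (vert d ε (fun i => if i = j then k i + 1 else k i))

/-- The simplex `S_{k,σ}` inside the cube `C_k`. -/
def simplexS (d : ℕ) (ε : ℝ) (k : Fin d → ℤ) (σ : Equiv.Perm (Fin d)) : Set (Pt d) :=
  {x | (∀ i, x i ∈ Set.Icc (ε * k i) (ε * (k i + 1))) ∧
    ∀ a b : Fin d, a ≤ b → x (σ a) - ε * k (σ a) ≤ x (σ b) - ε * k (σ b)}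

/-- `A` is the piecewise-affine extension `𝒜u` of `u`: it agrees with `u` on the vertex set
`ε ℤ^d` and is affine on each simplex `S_{k,σ}`. -/
def IsAffExt (d : ℕ) (ε : ℝ) (u A : Pt d → ℝ) : Prop :=
  (∀ k : Fin d → ℤ, A (vert d ε k) = u (vert d ε k)) ∧
  ∀ (k : Fin d → ℤ) (σ : Equiv.Perm (Fin d)), ∃ (L : Pt d →L[ℝ] ℝ) (c : ℝ),
    ∀ x ∈ simplexS d ε k σ, A x = L x + c

/-- The Gagliardo–Nirenberg quotient `Q_{q,𝒢_ε^d}(u)` (with edge derivative `g`),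
as a value in `[0,∞]`. -/
def Qgrid (d : ℕ) (ε q : ℝ) (u g : Pt d → ℝ) : ℝ≥0∞ :=
  gridLq d ε q u /
    ((gridL2sq d ε u) ^ (((d : ℝ) + (2 - (d : ℝ)) * (q / 2)) / 2) *
     (gridL2sq d ε g) ^ ((q / 2 - 1) * (d : ℝ) / 2))

/-- The sharp Gagliardo–Nirenberg constant `K_{q,𝒢_ε^d}`, a supremum in `[0,∞]`. -/
def Kgrid (d : ℕ) (ε q : ℝ) : ℝ≥0∞ :=
  ⨆ (u : Pt d → ℝ) (g : Pt d → ℝ) (_ : IsGridH1 d ε u g)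
    (_ : gridL2sq d ε u ≠ 0) (_ : gridL2sq d ε g ≠ 0), Qgrid d ε q u g

/-- The Gagliardo–Nirenberg quotient `Q_{q,ℝ^d}(v)`, as a value in `[0,∞]`. -/
def QReal (d : ℕ) (q : ℝ) (v : Pt d → ℝ) : ℝ≥0∞ :=
  (∫⁻ x, ENNReal.ofReal (|v x| ^ q)) /
    ((∫⁻ x, ENNReal.ofReal ((v x) ^ 2)) ^ (((d : ℝ) + (2 - (d : ℝ)) * (q / 2)) / 2) *
     (∫⁻ x, ENNReal.ofReal (‖fderiv ℝ v x‖ ^ 2)) ^ ((q / 2 - 1) * (d : ℝ) / 2))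

/-- `K^{Lip}_{q,ℝ^d}`: the supremum of the Gagliardo–Nirenberg quotient over nontrivial
locally Lipschitz functions on `ℝ^d` with finite norms. -/
def KLip (d : ℕ) (q : ℝ) : ℝ≥0∞ :=
  ⨆ (v : Pt d → ℝ) (_ : LocallyLipschitz v)
    (_ : (∫⁻ x, ENNReal.ofReal ((v x) ^ 2)) ≠ 0)
    (_ : (∫⁻ x, ENNReal.ofReal ((v x) ^ 2)) ≠ ∞)
    (_ : (∫⁻ x, ENNReal.ofReal (|v x| ^ q)) ≠ ∞)
    (_ : (∫⁻ x, ENNReal.ofReal (‖fderiv ℝ v x‖ ^ 2)) ≠ 0)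
    (_ : (∫⁻ x, ENNReal.ofReal (‖fderiv ℝ v x‖ ^ 2)) ≠ ∞), QReal d q v

/-- The modified action functional `J̃_{λ,𝒢_ε^d}` (of a function `u` with edge derivative `g`). -/
def Jact (d : ℕ) (ε lam p : ℝ) (u g : Pt d → ℝ) : ℝ :=
  (1 / 2) * (gridL2sq d ε g).toReal + lam / (2 * d) * (gridL2sq d ε u).toReal
    - 1 / ((d : ℝ) * p) * (gridLq d ε p u).toReal

/-- Membership in the Nehari manifold `Ñ_{λ,𝒢_ε^d}`. -/
def InNehari (d : ℕ) (ε lam p : ℝ) (u g : Pt d → ℝ) : Prop :=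
  IsGridH1 d ε u g ∧ gridL2sq d ε u ≠ 0 ∧ gridLq d ε p u ≠ ∞ ∧
    (d : ℝ) * (gridL2sq d ε g).toReal + lam * (gridL2sq d ε u).toReal = (gridLq d ε p u).toReal

/-- `u` (with edge derivative `g`) is an action ground state at frequency `lam`. -/
def IsActionGS (d : ℕ) (ε lam p : ℝ) (u g : Pt d → ℝ) : Prop :=
  InNehari d ε lam p u g ∧
    ∀ v h, InNehari d ε lam p v h → Jact d ε lam p u g ≤ Jact d ε lam p v h

/-- The modified energy functional `Ẽ_{𝒢_ε^d}` (of a function `u` with edge derivative `g`). -/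
def Egrid (d : ℕ) (ε p : ℝ) (u g : Pt d → ℝ) : ℝ :=
  (1 / 2) * (gridL2sq d ε g).toReal - 1 / ((d : ℝ) * p) * (gridLq d ε p u).toReal

/-- `u` (with edge derivative `g`) is an energy ground state at mass `m`. -/
def IsEnergyGS (d : ℕ) (ε p m : ℝ) (u g : Pt d → ℝ) : Prop :=
  IsGridH1 d ε u g ∧ (gridL2sq d ε u).toReal = m ∧ gridLq d ε p u ≠ ∞ ∧
    ∀ v h, IsGridH1 d ε v h → (gridL2sq d ε v).toReal = m → gridLq d ε p v ≠ ∞ →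
      Egrid d ε p u g ≤ Egrid d ε p v h

end

/-!
On a grid line `L` in direction `j`, `u` is integrable and absolutely continuous, so it is small
somewhere far out on both sides, whence `2 |u| ≤ ∫_L |g|` on `L` and
`∫_L u² ≤ ½ ∫_L |g| · ∫_L |u|`. Averaging the fundamental theorem of calculus over each unit edge
gives `∫_L |u| ≤ ∑ₙ |u(vₙ)| + ½ ∫_L |g|` over the vertices `vₙ` of `L`. Bounding `|u(vₙ)|` by half
the mass of `|g|` on the line through `vₙ` in a second direction `i ≠ j`, and using that these lines
and `L` are a.e. disjoint, yields `∫_L |u| ≤ ½ ‖g‖₁`. Summing over the a.e. disjoint lines of the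
grid gives `‖u‖₂² ≤ ¼ ‖g‖₁² ≤ (d - 1)/4 · ‖g‖₁²`.
-/

open Set intervalIntegral

open scoped Function

theorem exists_mem_lt_of_lintegral_ne_top {α : Type*} [MeasurableSpace α] {μ : Measure α}
    {f : α → ℝ≥0∞} {s : Set α} (hs : MeasurableSet s) (hμs : μ s = ∞)
    (hf : ∫⁻ x, f x ∂μ ≠ ∞) {c : ℝ≥0∞} (hc : c ≠ 0) : ∃ x ∈ s, f x < c := by
  by_contra! H
  have : c * μ s ≤ ∫⁻ x, f x ∂μ :=
    calc c * μ s = ∫⁻ _ in s, c ∂μ := (setLIntegral_const s c).symm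
    _ ≤ ∫⁻ x in s, f x ∂μ := setLIntegral_mono' hs H
    _ ≤ ∫⁻ x, f x ∂μ := setLIntegral_le_lintegral s f
  rw [hμs, ENNReal.mul_top hc] at this
  exact hf (top_le_iff.1 this)

theorem tsum_setLIntegral_le_of_subset {α ι : Type*} [MeasurableSpace α] [Countable ι]
    {μ : Measure α} {s : ι → Set α} {t : Set α} (hs : ∀ i, MeasurableSet (s i))
    (hd : Pairwise (AEDisjoint μ on s)) (hst : ∀ i, s i ⊆ t) (f : α → ℝ≥0∞) :
    ∑' i, ∫⁻ x in s i, f x ∂μ ≤ ∫⁻ x in t, f x ∂μ := by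
  rw [← lintegral_iUnion₀ (fun i => (hs i).nullMeasurableSet) hd]
  exact lintegral_mono_set (iUnion_subset hst)

section RealLine

variable {w h : ℝ → ℝ}

theorem sub_eq_integral_of_forall_Icc_intCast (hh : ∀ a b, IntervalIntegrable h volume a b)
    (hedge : ∀ n : ℤ, ∀ s ∈ Icc (n : ℝ) (n + 1), ∀ t ∈ Icc (n : ℝ) (n + 1),
      w t - w s = ∫ r in s..t, h r) (s t : ℝ) :
    w t - w s = ∫ r in s..t, h r := by
  set F : ℝ → ℝ := fun t => w t - ∫ r in (0 : ℝ)..t, h r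
  have hF_edge : ∀ n : ℤ, ∀ t ∈ Icc (n : ℝ) (n + 1), F t = F n := by
    intro n t ht
    have hwt := hedge n n (left_mem_Icc.2 (by linarith)) t ht
    have hsplit := integral_interval_sub_left (hh 0 t) (hh 0 n)
    simp only [F]
    linarith
  have hF_int : ∀ n : ℤ, F n = F 0 := by
    intro n
    induction n using Int.induction_on with
    | zero => simp
    | succ n ih =>
      rw [← ih]
      push_cast
      exact hF_edge n _ (right_mem_Icc.2 (by linarith))
    | pred n ih =>
      rw [← ih]
      have := hF_edge (-n - 1) (-n : ℤ) ⟨by push_cast; linarith, by push_cast; linarith⟩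
      push_cast at this ⊢
      exact this.symm
  have hF : ∀ t, F t = F 0 := fun t =>
    (hF_edge ⌊t⌋ t ⟨Int.floor_le t, (Int.lt_floor_add_one t).le⟩).trans (hF_int _)
  have hts := integral_interval_sub_left (hh 0 t) (hh 0 s)
  have hFst := (hF t).trans (hF s).symm
  simp only [F] at hFst
  linarith

theorem two_mul_abs_le_of_mem_Icc {a b t : ℝ} (hh : IntervalIntegrable h volume a b)
    (hwh : ∀ s t, w t - w s = ∫ r in s..t, h r) (ht : t ∈ Icc a b) :
    2 * |w t| ≤ |w a| + |w b| + ∫ r in a..b, |h r| := by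
  have hleft : |w t - w a| ≤ ∫ r in a..t, |h r| := by
    rw [hwh]; exact abs_integral_le_integral_abs ht.1
  have hright : |w b - w t| ≤ ∫ r in t..b, |h r| := by
    rw [hwh]; exact abs_integral_le_integral_abs ht.2
  have htab : t ∈ uIcc a b := mem_uIcc_of_le ht.1 ht.2
  have hsplit := integral_add_adjacent_intervals
    (hh.abs.mono_set (uIcc_subset_uIcc left_mem_uIcc htab))
    (hh.abs.mono_set (uIcc_subset_uIcc htab right_mem_uIcc))
  have := abs_sub_abs_le_abs_sub (w t) (w a)
  have := abs_sub_abs_le_abs_sub (w t) (w b)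
  rw [abs_sub_comm (w t) (w b)] at this
  linarith

theorem ofReal_intervalIntegral_abs {a b : ℝ} (hh : Integrable h) (hab : a ≤ b) :
    ENNReal.ofReal (∫ r in a..b, |h r|) = ∫⁻ r in Ioc a b, ENNReal.ofReal |h r| := by
  rw [integral_of_le hab]
  exact ofReal_integral_eq_lintegral_ofReal hh.abs.integrableOn
    (Filter.Eventually.of_forall fun _ => abs_nonneg _)

theorem ofReal_abs_le_half_lintegral (hh : Integrable h)
    (hwh : ∀ s t, w t - w s = ∫ r in s..t, h r) (hw : ∫⁻ x, ENNReal.ofReal |w x| ≠ ∞) (t : ℝ) :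
    ENNReal.ofReal |w t| ≤ (∫⁻ x, ENNReal.ofReal |h x|) / 2 := by
  suffices 2 * |w t| ≤ ∫ x, |h x| by
    have hI : ENNReal.ofReal |w t| ≤ ENNReal.ofReal ((∫ x, |h x|) / 2) :=
      ENNReal.ofReal_le_ofReal (by linarith)
    rwa [ENNReal.ofReal_div_of_pos two_pos, ENNReal.ofReal_ofNat,
      ofReal_integral_eq_lintegral_ofReal hh.abs
        (Filter.Eventually.of_forall fun _ => abs_nonneg _)] at hI
  refine le_of_forall_pos_le_add fun ε hε => ?_
  have hε' : ENNReal.ofReal (ε / 2) ≠ 0 := by positivity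
  obtain ⟨s, hs, hws⟩ := exists_mem_lt_of_lintegral_ne_top (s := Iic t) measurableSet_Iic
    (by rw [Real.volume_Iic]) hw hε'
  obtain ⟨r, hr, hwr⟩ := exists_mem_lt_of_lintegral_ne_top (s := Ici t) measurableSet_Ici
    (by rw [Real.volume_Ici]) hw hε'
  rw [ENNReal.ofReal_lt_ofReal_iff (by positivity)] at hws hwr
  have hbound :=
    two_mul_abs_le_of_mem_Icc hh.intervalIntegrable hwh (show t ∈ Icc s r from ⟨hs, hr⟩)
  have hsr : ∫ x in s..r, |h x| ≤ ∫ x, |h x| := by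
    rw [integral_of_le (le_trans hs hr)]
    exact setIntegral_le_integral hh.abs (Filter.Eventually.of_forall fun _ => abs_nonneg _)
  linarith

theorem setLIntegral_Ioc_abs_le (hh : Integrable h)
    (hwh : ∀ s t, w t - w s = ∫ r in s..t, h r) (a : ℝ) :
    ∫⁻ t in Ioc a (a + 1), ENNReal.ofReal |w t| ≤
      (ENNReal.ofReal |w a| + ENNReal.ofReal |w (a + 1)| +
        ∫⁻ t in Ioc a (a + 1), ENNReal.ofReal |h t|) / 2 := by
  have ha : a ≤ a + 1 := by linarith
  set C := (|w a| + |w (a + 1)| + ∫ r in a..a + 1, |h r|) / 2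
  calc ∫⁻ t in Ioc a (a + 1), ENNReal.ofReal |w t|
      ≤ ∫⁻ _ in Ioc a (a + 1), ENNReal.ofReal C :=
        setLIntegral_mono' measurableSet_Ioc fun t ht => ENNReal.ofReal_le_ofReal <| by
          have := two_mul_abs_le_of_mem_Icc hh.intervalIntegrable hwh (Ioc_subset_Icc_self ht)
          simp only [C]; linarith
    _ = ENNReal.ofReal C := by simp
    _ = _ := by
      rw [ENNReal.ofReal_div_of_pos two_pos, ENNReal.ofReal_add (by positivity)
        (intervalIntegral.integral_nonneg ha fun _ _ => abs_nonneg _),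
        ENNReal.ofReal_add (abs_nonneg _) (abs_nonneg _), ofReal_intervalIntegral_abs hh ha,
        ENNReal.ofReal_ofNat]

theorem lintegral_eq_tsum_Ioc_intCast (f : ℝ → ℝ≥0∞) :
    ∫⁻ x, f x = ∑' n : ℤ, ∫⁻ x in Ioc (n : ℝ) (n + 1), f x := by
  rw [← lintegral_iUnion (fun _ => measurableSet_Ioc) (pairwise_disjoint_Ioc_intCast ℝ),
    iUnion_Ioc_intCast, Measure.restrict_univ]

theorem lintegral_abs_le_tsum_add_half (hh : Integrable h)
    (hwh : ∀ s t, w t - w s = ∫ r in s..t, h r) :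
    ∫⁻ x, ENNReal.ofReal |w x| ≤
      ∑' n : ℤ, ENNReal.ofReal |w n| + (∫⁻ x, ENNReal.ofReal |h x|) / 2 := by
  have hshift : ∑' n : ℤ, ENNReal.ofReal |w ((n : ℝ) + 1)| = ∑' n : ℤ, ENNReal.ofReal |w n| := by
    exact_mod_cast (Equiv.addRight (1 : ℤ)).tsum_eq fun n : ℤ => ENNReal.ofReal |w n|
  calc ∫⁻ x, ENNReal.ofReal |w x|
      ≤ ∑' n : ℤ, (ENNReal.ofReal |w n| + ENNReal.ofReal |w ((n : ℝ) + 1)| +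
          ∫⁻ t in Ioc (n : ℝ) (n + 1), ENNReal.ofReal |h t|) / 2 := by
        rw [lintegral_eq_tsum_Ioc_intCast]
        exact ENNReal.tsum_le_tsum fun n => setLIntegral_Ioc_abs_le hh hwh n
    _ = (∑' n : ℤ, ENNReal.ofReal |w n| + ∑' n : ℤ, ENNReal.ofReal |w n| +
          ∫⁻ x, ENNReal.ofReal |h x|) / 2 := by
        simp only [div_eq_mul_inv]
        rw [ENNReal.tsum_mul_right, ENNReal.tsum_add, ENNReal.tsum_add, hshift,
          ← lintegral_eq_tsum_Ioc_intCast]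
    _ = _ := by rw [ENNReal.add_div, ENNReal.add_div, ENNReal.add_halves]

end RealLine

section GridLines

variable {d : ℕ}

def lineThru (y : Pt d) (j : Fin d) : Set (Pt d) := {x | ∀ i, i ≠ j → x i = y i}

theorem isometry_upd (y : Pt d) (j : Fin d) : Isometry (upd y j) := by
  refine Isometry.of_dist_eq fun s t => ?_
  rw [EuclideanSpace.dist_eq, Finset.sum_eq_single j]
  · simp [upd, Real.sqrt_sq_eq_abs, Real.dist_eq]
  · intro i _ hi
    simp [upd, Function.update_of_ne hi]
  · simp

theorem range_upd (y : Pt d) (j : Fin d) : range (upd y j) = lineThru y j := by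
  ext x
  constructor
  · rintro ⟨t, rfl⟩ i hi
    simp [upd, Function.update_of_ne hi]
  · intro hx
    refine ⟨x j, PiLp.ext fun i => ?_⟩
    by_cases hi : i = j
    · subst hi; simp [upd]
    · simp [upd, Function.update_of_ne hi, hx i hi]

theorem measurableSet_lineThru (y : Pt d) (j : Fin d) : MeasurableSet (lineThru y j) := by
  rw [← range_upd]
  exact (isometry_upd y j).isClosedEmbedding.isClosed_range.measurableSet

theorem setLIntegral_lineThru (y : Pt d) (j : Fin d) (F : Pt d → ℝ≥0∞) :
    ∫⁻ x in lineThru y j, F x ∂μH[1] = ∫⁻ t, F (upd y j t) := by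
  have hy := isometry_upd y j
  rw [← range_upd, ← hy.map_hausdorffMeasure (Or.inl zero_le_one), hausdorffMeasure_real,
    hy.isClosedEmbedding.measurableEmbedding.lintegral_map]

theorem lineThru_subset_grid {ε : ℝ} {y : Pt d} {j : Fin d}
    (hy : ∀ i, i ≠ j → ∃ m : ℤ, y i = ε * m) : lineThru y j ⊆ grid d ε := fun _ hx =>
  mem_iUnion.2 ⟨j, fun i hi => hx i hi ▸ hy i hi⟩

theorem setLIntegral_lineThru_le_gridInt {y : Pt d} {j : Fin d}
    (hy : ∀ i, i ≠ j → ∃ m : ℤ, y i = (m : ℝ))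
    (f : Pt d → ℝ) : ∫⁻ x in lineThru y j, ENNReal.ofReal (f x) ∂μH[1] ≤ gridInt d 1 f :=
  lintegral_mono_set <| lineThru_subset_grid fun i hi => by simpa using hy i hi

theorem upd_eq_of_mem_lineThru {x y : Pt d} {j : Fin d} (hx : x ∈ lineThru y j) :
    upd y j (x j) = x := by
  obtain ⟨t, rfl⟩ := (range_upd y j).symm ▸ hx
  simp [upd]

theorem exists_intCast_upd {y : Pt d} {j : Fin d}
    (hy : ∀ i, i ≠ j → ∃ m : ℤ, y i = (m : ℝ)) (n : ℤ) (l : Fin d) :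
    ∃ m : ℤ, upd y j n l = (m : ℝ) := by
  by_cases hlj : l = j
  · subst hlj
    exact ⟨n, by simp [upd]⟩
  · obtain ⟨m, hm⟩ := hy l hlj
    exact ⟨m, by simp [upd, Function.update_of_ne hlj, hm]⟩

theorem aedisjoint_lineThru {y y' : Pt d} {j j' : Fin d} (h : j ≠ j' ∨ ∃ i ≠ j, y i ≠ y' i) :
    AEDisjoint μH[1] (lineThru y j) (lineThru y' j') := by
  obtain hjj' | hjj' := eq_or_ne j j'
  · obtain ⟨i, hij, hyi⟩ := h.resolve_left (not_not.2 hjj')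
    subst hjj'
    exact (disjoint_left.2 fun x hx hx' => hyi ((hx i hij).symm.trans (hx' i hij))).aedisjoint
  · have := Measure.nullSingletonClass_hausdorff (X := Pt d) one_pos
    refine Subsingleton.measure_zero ?_ _
    rintro x ⟨hx, hx'⟩ z ⟨hz, hz'⟩
    refine PiLp.ext fun i => ?_
    by_cases hij : i = j
    · subst hij; rw [hx' i hjj', hz' i hjj']
    · rw [hx i hij, hz i hij]

end GridLines

namespace IsGridW11

variable {d : ℕ} {u g : Pt d → ℝ} {y : Pt d} {j : Fin d}

theorem integrable_comp_upd (h : IsGridW11 d u g) (hy : ∀ i, i ≠ j → ∃ m : ℤ, y i = (m : ℝ)) :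
    Integrable fun t => g (upd y j t) := by
  refine ⟨(h.meas_g.comp (isometry_upd y j).continuous.measurable).aestronglyMeasurable, ?_⟩
  simp only [hasFiniteIntegral_iff_norm, Real.norm_eq_abs]
  rw [← setLIntegral_lineThru y j fun x => ENNReal.ofReal |g x|]
  exact (setLIntegral_lineThru_le_gridInt hy _).trans_lt h.finL1g.lt_top

theorem lintegral_abs_comp_upd_ne_top (h : IsGridW11 d u g)
    (hy : ∀ i, i ≠ j → ∃ m : ℤ, y i = (m : ℝ)) :
    ∫⁻ t, ENNReal.ofReal |u (upd y j t)| ≠ ∞ := by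
  rw [← setLIntegral_lineThru y j fun x => ENNReal.ofReal |u x|]
  exact ((setLIntegral_lineThru_le_gridInt hy _).trans_lt h.finL1u.lt_top).ne

theorem sub_eq_integral_comp_upd (h : IsGridW11 d u g)
    (hy : ∀ i, i ≠ j → ∃ m : ℤ, y i = (m : ℝ)) (s t : ℝ) :
    u (upd y j t) - u (upd y j s) = ∫ r in s..t, g (upd y j r) :=
  sub_eq_integral_of_forall_Icc_intCast (fun _ _ => (h.integrable_comp_upd hy).intervalIntegrable)
    (h.ftc j y hy) s t

theorem ofReal_abs_le_half_setLIntegral_lineThru (h : IsGridW11 d u g)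
    (hy : ∀ i, i ≠ j → ∃ m : ℤ, y i = (m : ℝ)) {x : Pt d} (hx : x ∈ lineThru y j) :
    ENNReal.ofReal |u x| ≤ (∫⁻ x in lineThru y j, ENNReal.ofReal |g x| ∂μH[1]) / 2 := by
  rw [setLIntegral_lineThru, ← upd_eq_of_mem_lineThru hx]
  exact ofReal_abs_le_half_lintegral (h.integrable_comp_upd hy) (h.sub_eq_integral_comp_upd hy)
    (h.lintegral_abs_comp_upd_ne_top hy) _

theorem setLIntegral_abs_lineThru_le (h : IsGridW11 d u g)
    (hy : ∀ i, i ≠ j → ∃ m : ℤ, y i = (m : ℝ)) :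
    ∫⁻ x in lineThru y j, ENNReal.ofReal |u x| ∂μH[1] ≤
      ∑' n : ℤ, ENNReal.ofReal |u (upd y j n)| +
        (∫⁻ x in lineThru y j, ENNReal.ofReal |g x| ∂μH[1]) / 2 := by
  simp only [setLIntegral_lineThru]
  exact lintegral_abs_le_tsum_add_half (h.integrable_comp_upd hy) (h.sub_eq_integral_comp_upd hy)

theorem setLIntegral_abs_lineThru_le_half_gridInt (h : IsGridW11 d u g)
    (hy : ∀ i, i ≠ j → ∃ m : ℤ, y i = (m : ℝ)) {i : Fin d} (hij : i ≠ j) :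
    ∫⁻ x in lineThru y j, ENNReal.ofReal |u x| ∂μH[1] ≤ gridInt d 1 (fun x => |g x|) / 2 := by
  set A : Set (Pt d) → ℝ≥0∞ := fun s => ∫⁻ x in s, ENNReal.ofReal |g x| ∂μH[1]
  set cross : Unit ⊕ ℤ → Set (Pt d) :=
    Sum.elim (fun _ => lineThru y j) (fun n => lineThru (upd y j n) i)
  have hcross : A (lineThru y j) + ∑' n : ℤ, A (lineThru (upd y j n) i) ≤
      gridInt d 1 (fun x => |g x|) := by
    have := tsum_setLIntegral_le_of_subset (s := cross) (t := grid d 1) (μ := μH[1])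
      (Sum.rec (fun _ => measurableSet_lineThru _ _) fun _ => measurableSet_lineThru _ _) ?_
      (Sum.rec (fun _ => lineThru_subset_grid fun l hl => by simpa using hy l hl)
        fun n => lineThru_subset_grid fun l _ => by simpa using exists_intCast_upd hy n l)
      fun x => ENNReal.ofReal |g x|
    · rwa [ENNReal.summable.tsum_sum ENNReal.summable, (hasSum_unique _).tsum_eq] at this
    rintro (⟨⟩ | n) (⟨⟩ | m) hnm
    · exact absurd rfl hnm
    · exact aedisjoint_lineThru (Or.inl hij.symm)
    · exact aedisjoint_lineThru (Or.inl hij)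
    · refine aedisjoint_lineThru (Or.inr ⟨j, hij.symm, ?_⟩)
      simpa [upd] using fun e => hnm (congrArg Sum.inr e)
  calc ∫⁻ x in lineThru y j, ENNReal.ofReal |u x| ∂μH[1]
      ≤ ∑' n : ℤ, ENNReal.ofReal |u (upd y j n)| + A (lineThru y j) / 2 :=
        h.setLIntegral_abs_lineThru_le hy
    _ ≤ ∑' n : ℤ, A (lineThru (upd y j n) i) / 2 + A (lineThru y j) / 2 := by
        gcongr with n
        exact h.ofReal_abs_le_half_setLIntegral_lineThru (fun l _ => exists_intCast_upd hy n l)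
          fun _ _ => rfl
    _ = (A (lineThru y j) + ∑' n : ℤ, A (lineThru (upd y j n) i)) / 2 := by
        simp only [div_eq_mul_inv]
        rw [ENNReal.tsum_mul_right, add_mul, add_comm]
    _ ≤ gridInt d 1 (fun x => |g x|) / 2 := by gcongr

theorem setLIntegral_sq_lineThru_le (h : IsGridW11 d u g) (hd : 2 ≤ d)
    (hy : ∀ i, i ≠ j → ∃ m : ℤ, y i = (m : ℝ)) :
    ∫⁻ x in lineThru y j, ENNReal.ofReal (u x ^ 2) ∂μH[1] ≤
      (∫⁻ x in lineThru y j, ENNReal.ofReal |g x| ∂μH[1]) / 2 *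
        (gridInt d 1 (fun x => |g x|) / 2) := by
  have : Nontrivial (Fin d) := Fin.nontrivial_iff_two_le.2 hd
  obtain ⟨i, hij⟩ := exists_ne j
  set C := (∫⁻ x in lineThru y j, ENNReal.ofReal |g x| ∂μH[1]) / 2
  calc ∫⁻ x in lineThru y j, ENNReal.ofReal (u x ^ 2) ∂μH[1]
      ≤ ∫⁻ x in lineThru y j, C * ENNReal.ofReal |u x| ∂μH[1] := by
        refine setLIntegral_mono' (measurableSet_lineThru y j) fun x hx => ?_
        rw [← sq_abs, sq, ENNReal.ofReal_mul (abs_nonneg _)]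
        gcongr
        exact h.ofReal_abs_le_half_setLIntegral_lineThru hy hx
    _ = C * ∫⁻ x in lineThru y j, ENNReal.ofReal |u x| ∂μH[1] :=
        lintegral_const_mul C h.meas_u.abs.ennreal_ofReal
    _ ≤ C * (gridInt d 1 (fun x => |g x|) / 2) := by
        gcongr
        exact h.setLIntegral_abs_lineThru_le_half_gridInt hy hij

end IsGridW11

section GridLineIdx

variable {d : ℕ}

/-- A line of `𝒢_1^d` in direction `j` is indexed by its integer point `k` with `k j = 0`. -/
def GridLineIdx (d : ℕ) := Σ j : Fin d, {k : Fin d → ℤ // k j = 0}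

instance : Countable (GridLineIdx d) := by unfold GridLineIdx; infer_instance

def gridLine (p : GridLineIdx d) : Set (Pt d) := lineThru (vert d 1 p.2.1) p.1

theorem grid_subset_iUnion_gridLine : grid d 1 ⊆ ⋃ p : GridLineIdx d, gridLine p := by
  intro x hx
  obtain ⟨j, hj⟩ := mem_iUnion.1 hx
  choose k hk using hj
  refine mem_iUnion.2 ⟨⟨j, fun i => if hi : i = j then 0 else k i hi, by simp⟩, fun i hi => ?_⟩
  simp [vert, hi, hk i hi]

theorem pairwise_aedisjoint_gridLine :
    Pairwise (AEDisjoint μH[1] on (gridLine : GridLineIdx d → Set (Pt d))) := by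
  rintro ⟨j, k, hk⟩ ⟨j', k', hk'⟩ hne
  refine aedisjoint_lineThru ((em (j = j')).symm.imp id fun hjj' => ?_)
  subst hjj'
  obtain ⟨i, hi⟩ := Function.ne_iff.1 fun e : k = k' => hne (by subst e; rfl)
  exact ⟨i, fun e => hi (e ▸ hk.trans hk'.symm), by simpa [vert] using hi⟩

theorem exists_intCast_vert (k : Fin d → ℤ) (i : Fin d) : ∃ m : ℤ, vert d 1 k i = (m : ℝ) :=
  ⟨k i, by simp [vert]⟩

end GridLineIdx

/-- the two-dimensional Sobolev inequality (19) on the `d`-dimensional grid. -/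
theorem stmt_9 (d : ℕ) (hd : 2 ≤ d) (u g : Pt d → ℝ) (h : IsGridW11 d u g) :
    gridL2sq d 1 u ≤
      ENNReal.ofReal (((d : ℝ) - 1) / 4) * (gridInt d 1 (fun x => |g x|)) ^ 2 := by
  set M := gridInt d 1 (fun x => |g x|)
  have hquarter : ENNReal.ofReal (1 / 4) = 2⁻¹ ^ 2 := by
    rw [← ENNReal.inv_pow, one_div, ENNReal.ofReal_inv_of_pos (by norm_num)]
    norm_num
  calc gridL2sq d 1 u
      ≤ ∑' p : GridLineIdx d, ∫⁻ x in gridLine p, ENNReal.ofReal (u x ^ 2) ∂μH[1] :=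
        (lintegral_mono_set grid_subset_iUnion_gridLine).trans (lintegral_iUnion_le _ _)
    _ ≤ ∑' p : GridLineIdx d, (∫⁻ x in gridLine p, ENNReal.ofReal |g x| ∂μH[1]) / 2 * (M / 2) :=
        ENNReal.tsum_le_tsum fun p =>
          h.setLIntegral_sq_lineThru_le hd fun i _ => exists_intCast_vert _ i
    _ = (∑' p : GridLineIdx d, ∫⁻ x in gridLine p, ENNReal.ofReal |g x| ∂μH[1]) / 2 * (M / 2) := by
        simp only [div_eq_mul_inv, ENNReal.tsum_mul_right]
    _ ≤ M / 2 * (M / 2) := by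
        gcongr
        exact tsum_setLIntegral_le_of_subset (fun p => measurableSet_lineThru _ _)
          pairwise_aedisjoint_gridLine
          (fun p => lineThru_subset_grid fun i _ => ⟨p.2.1 i, rfl⟩) _
    _ = ENNReal.ofReal (1 / 4) * M ^ 2 := by
        rw [hquarter, div_eq_mul_inv]
        ring
    _ ≤ ENNReal.ofReal (((d : ℝ) - 1) / 4) * M ^ 2 := by
        gcongr
        linarith [show (2 : ℝ) ≤ d by exact_mod_cast hd]
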